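/- For every k ≥ 0 and ℓ ≥ 1, the number of occurrences of the pattern [1-2^ℓ) in the Peano word X_{2k+2} equals C(4^{2k+1}, ℓ) + C(4^{2k+1}-2^{2k+1}, ℓ). -/

import Mathlib

/-- φ1: reverse the word and apply 1↦4, 2↦1, 3↦2, 4↦3. -/
def phi1 (A : List ℕ) : List ℕ := A.reverse.map (fun x => if x = 1 then 4 else x - 1)

/-- φ2: reverse the word and apply 1↦2, 2↦3, 3↦4, 4↦1. -/
def phi2 (A : List ℕ) : List ℕ := A.reverse.map (fun x => if x = 4 then 1 else x + 1)

/-- The Peano words: `peano 1 = 123`, `peano (n+1) = φ1(Xₙ) 1 Xₙ 2 Xₙ 3 φ2(Xₙ)`. -/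
def peano : ℕ → List ℕ
  | 0 => []
  | 1 => [1, 2, 3]
  | n + 2 =>
      phi1 (peano (n + 1)) ++ [1] ++ peano (n + 1) ++ [2] ++ peano (n + 1)
        ++ [3] ++ phi2 (peano (n + 1))

/-- Number of rises of a word. -/
def rises (w : List ℕ) : ℕ := ((w.zip w.tail).filter (fun p => p.1 < p.2)).length

/-- Number of descents of a word. -/
def descents (w : List ℕ) : ℕ := ((w.zip w.tail).filter (fun p => p.2 < p.1)).length

/-- Number of occurrences of the pattern `[1-2^ℓ)`: sets of `ℓ` positions, none of them
the first, at which the letters of `w` all coincide and are larger than the first letter. -/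
def pat12Count (w : List ℕ) (ℓ : ℕ) : ℕ :=
  (Finset.univ.filter (fun s : Finset (Fin w.length) =>
    s.card = ℓ ∧ (∀ i ∈ s, 0 < (i : ℕ)) ∧ (∀ i ∈ s, ∀ j ∈ s, w.get i = w.get j) ∧
      ∀ i ∈ s, w.headI < w.get i)).card

/-!
Since `ℓ ≥ 1`, an occurrence of `[1-2^ℓ)` is a nonempty set of positions carrying one letter
`v` larger than the first letter; the first position is then excluded automatically. Hence the
number of occurrences is `∑_{v > w₁} C(|w|_v, ℓ)`. The word `X_{2k+2}` starts with `2`, so only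
the letters `3` and `4` contribute, and the recursion gives
`|X_{n+1}|_3 = 4ⁿ` and `|X_{n+1}|_4 = 4ⁿ - 2ⁿ`, together with `|X_{n+1}|_1 = 4ⁿ` and
`|X_{n+1}|_2 = 4ⁿ + 2ⁿ - 1`, because `φ1` and `φ2` permute the letter counts cyclically.
The first letter of `X_{n+2}` is the `φ1`-image of the last letter of `X_{n+1}`, and its last
letter the `φ2`-image of the first one; so every `X_{2k+1}` runs from `1` to `3`, and `X_{2k+2}`
starts with `φ1(3) = 2`.
-/

open Finset

lemma List.card_filter_get_eq_count {α : Type*} [DecidableEq α] (l : List α) (a : α) :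
    #{i : Fin l.length | l.get i = a} = l.count a :=
  Fin.card_filter_univ_eq_vector_get_eq_count a ⟨l, rfl⟩

lemma List.get_eq_headI_of_val_eq_zero {α : Type*} [Inhabited α] {l : List α} {i : Fin l.length}
    (hi : (i : ℕ) = 0) : l.get i = l.headI := by
  cases l with
  | nil => exact i.elim0
  | cons a t => simp [hi]

theorem pat12Count_eq_sum_choose_count {w : List ℕ} {ℓ b : ℕ} (hℓ : 1 ≤ ℓ)
    (hb : ∀ x ∈ w, x ≤ b) :
    pat12Count w ℓ = ∑ v ∈ Ioc w.headI b, (w.count v).choose ℓ := by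
  set pos : ℕ → Finset (Fin w.length) := fun v => {i | w.get i = v}
  have hocc : univ.filter (fun s : Finset (Fin w.length) => s.card = ℓ ∧
      (∀ i ∈ s, 0 < (i : ℕ)) ∧ (∀ i ∈ s, ∀ j ∈ s, w.get i = w.get j) ∧
      ∀ i ∈ s, w.headI < w.get i) =
      (Ioc w.headI b).biUnion fun v => powersetCard ℓ (pos v) := by
    ext s
    simp only [mem_filter, mem_univ, true_and, mem_biUnion, mem_Ioc, mem_powersetCard,
      subset_iff, pos]
    constructor
    · rintro ⟨hcard, -, hsame, hgt⟩
      obtain ⟨i, hi⟩ := card_pos.mp (hcard ▸ hℓ)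
      exact ⟨w.get i, ⟨hgt i hi, hb _ (w.get_mem i)⟩,
        fun j hj => by simpa using hsame j hj i hi, hcard⟩
    · rintro ⟨v, ⟨hv, -⟩, hs, hcard⟩
      have hsv : ∀ i ∈ s, w.get i = v := fun i hi => by simpa using hs hi
      refine ⟨hcard, fun i hi => Nat.pos_of_ne_zero fun h0 => ?_,
        fun i hi j hj => by rw [hsv i hi, hsv j hj], fun i hi => hsv i hi ▸ hv⟩
      have h := hsv i hi ▸ hv
      rw [List.get_eq_headI_of_val_eq_zero h0] at h
      exact lt_irrefl _ h
  have hdisj : (Ioc w.headI b : Set ℕ).PairwiseDisjoint fun v => powersetCard ℓ (pos v) := by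
    intro u _ v _ huv
    refine disjoint_left.mpr fun s hsu hsv => huv ?_
    rw [mem_powersetCard] at hsu hsv
    obtain ⟨i, hi⟩ := card_pos.mp (hsu.2 ▸ hℓ)
    exact (mem_filter.mp (hsu.1 hi)).2.symm.trans (mem_filter.mp (hsv.1 hi)).2
  rw [pat12Count, hocc, card_biUnion hdisj]
  simp only [card_powersetCard, pos, List.card_filter_get_eq_count]

lemma peano_add_two (n : ℕ) :
    peano (n + 2) = phi1 (peano (n + 1)) ++ [1] ++ peano (n + 1) ++ [2] ++ peano (n + 1)
      ++ [3] ++ phi2 (peano (n + 1)) := rfl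

lemma peano_ne_nil (n : ℕ) : peano (n + 1) ≠ [] := by
  cases n <;> simp [peano]

theorem peano_mem_Icc : ∀ n, ∀ x ∈ peano n, x ∈ Icc 1 4
  | 0 => by simp [peano]
  | 1 => by simp [peano]
  | n + 2 => by
    have ih := peano_mem_Icc (n + 1)
    simp only [peano_add_two, phi1, phi2, List.mem_append, List.mem_map, List.mem_reverse,
      List.mem_singleton]
    rintro x ((((((⟨y, hy, rfl⟩ | rfl) | hx) | rfl) | hx) | rfl) | ⟨y, hy, rfl⟩)
    · have := mem_Icc.mp (ih y hy)
      simp only [mem_Icc]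
      split_ifs <;> omega
    · decide
    · exact ih x hx
    · decide
    · exact ih x hx
    · decide
    · have := mem_Icc.mp (ih y hy)
      simp only [mem_Icc]
      split_ifs <;> omega

lemma count_phi1 {l : List ℕ} (hl : ∀ x ∈ l, x ∈ Icc 1 4) {v : ℕ} (hv : v ∈ Icc 1 4) :
    (phi1 l).count v = l.count (if v = 4 then 1 else v + 1) := by
  simp only [phi1, List.count_eq_countP, List.countP_map, List.countP_reverse]
  refine List.countP_congr fun x hx => ?_
  have := hl x hx
  simp only [mem_Icc] at this hv
  simp only [Function.comp_apply, beq_iff_eq]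
  split_ifs <;> omega

lemma count_phi2 {l : List ℕ} (hl : ∀ x ∈ l, x ∈ Icc 1 4) {v : ℕ} (hv : v ∈ Icc 1 4) :
    (phi2 l).count v = l.count (if v = 1 then 4 else v - 1) := by
  simp only [phi2, List.count_eq_countP, List.countP_map, List.countP_reverse]
  refine List.countP_congr fun x hx => ?_
  have := hl x hx
  simp only [mem_Icc] at this hv
  simp only [Function.comp_apply, beq_iff_eq]
  split_ifs <;> omega

theorem peano_count (n : ℕ) :
    (peano (n + 1)).count 1 = 4 ^ n ∧ (peano (n + 1)).count 2 = 4 ^ n + 2 ^ n - 1 ∧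
      (peano (n + 1)).count 3 = 4 ^ n ∧ (peano (n + 1)).count 4 = 4 ^ n - 2 ^ n := by
  induction n with
  | zero => decide
  | succ n ih =>
    obtain ⟨h1, h2, h3, h4⟩ := ih
    have hl := peano_mem_Icc (n + 1)
    have h2n : 1 ≤ 2 ^ n := Nat.one_le_two_pow
    have h4n : 2 ^ n ≤ 4 ^ n := Nat.pow_le_pow_left (by norm_num) n
    simp (disch := decide) only [peano_add_two, List.count_append, count_phi1 hl,
      count_phi2 hl]
    norm_num [h1, h2, h3, h4, pow_succ]
    omega

lemma head?_peano_add_two (n : ℕ) :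
    (peano (n + 2)).head? = (peano (n + 1)).getLast?.map fun x => if x = 1 then 4 else x - 1 := by
  rw [peano_add_two]
  simp only [List.append_assoc]
  rw [List.head?_append_of_ne_nil _ (by simpa [phi1] using peano_ne_nil n)]
  simp [phi1, List.head?_reverse]

lemma getLast?_peano_add_two (n : ℕ) :
    (peano (n + 2)).getLast? = (peano (n + 1)).head?.map fun x => if x = 4 then 1 else x + 1 := by
  rw [peano_add_two, List.getLast?_append_of_ne_nil _ (by simpa [phi2] using peano_ne_nil n)]
  simp [phi2, List.getLast?_reverse]

theorem peano_odd_head?_getLast? (n : ℕ) :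
    (peano (2 * n + 1)).head? = some 1 ∧ (peano (2 * n + 1)).getLast? = some 3 := by
  induction n with
  | zero => decide
  | succ n ih =>
    rw [show 2 * (n + 1) + 1 = 2 * n + 1 + 2 by ring, head?_peano_add_two, getLast?_peano_add_two,
      getLast?_peano_add_two, head?_peano_add_two, ih.1, ih.2]
    decide

theorem headI_peano_even (k : ℕ) : (peano (2 * k + 2)).headI = 2 := by
  have h := head?_peano_add_two (2 * k)
  rw [(peano_odd_head?_getLast? k).2] at h
  cases hw : peano (2 * k + 2) <;> simp_all

theorem peano_pat12_even (k ℓ : ℕ) (hℓ : 1 ≤ ℓ) :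
    pat12Count (peano (2 * k + 2)) ℓ =
      Nat.choose (4 ^ (2 * k + 1)) ℓ + Nat.choose (4 ^ (2 * k + 1) - 2 ^ (2 * k + 1)) ℓ := by
  have hb : ∀ x ∈ peano (2 * k + 2), x ≤ 4 := fun x hx => (mem_Icc.mp (peano_mem_Icc _ x hx)).2
  obtain ⟨-, -, h3, h4⟩ := peano_count (2 * k + 1)
  rw [pat12Count_eq_sum_choose_count hℓ hb, headI_peano_even,
    show Ioc 2 4 = {3, 4} by rfl, sum_pair (by norm_num), h3, h4]
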